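/- The set of CL-valid formulas is closed under uniform substitution: if φ is CL-valid and σ is a substitution of formulas for atoms, then σ(φ) is CL-valid. -/

import Mathlib

/- Formalization of Lorenzen dialogue games, following Felscher's presentation.

   Propositional formulas are built from atoms using ¬, ∧, ∨, →.  A dialogue
   for a formula φ is a sequence of moves beginning with Proponent (P)
   asserting φ at position 0, with O moving at odd positions and P at even
   positions.  Each later move attacks or defends an earlier move of the other
   player, according to the particle rules.  Structural rules (D10, D11, D12,
   D13, E, and the variants D10*, D10′) constrain dialogues further.  P wins
   if P made the last move and no moves are available to O; φ is S-valid if P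
   has an S-winning strategy for φ. -/

namespace LorenzenDialogues

/-- Propositional formulas: atoms, ¬, ∧, ∨, →. -/
inductive Formula : Type
  | atom : ℕ → Formula
  | neg  : Formula → Formula
  | and  : Formula → Formula → Formula
  | or   : Formula → Formula → Formula
  | imp  : Formula → Formula → Formula
deriving DecidableEq

/-- Statements: formulas together with the symbolic attacks `?`, `∧_L`, `∧_R`. -/
inductive Statement : Type
  | form  : Formula → Statement
  | qmark : Statement
  | andL  : Statement
  | andR  : Statement
deriving DecidableEq

/-- Particle rules, attack part: which statements attack which formulas. -/
inductive Attacks : Statement → Formula → Prop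
  | andL (a b : Formula) : Attacks .andL (.and a b)
  | andR (a b : Formula) : Attacks .andR (.and a b)
  | qmark (a b : Formula) : Attacks .qmark (.or a b)
  | imp (a b : Formula) : Attacks (.form a) (.imp a b)
  | neg (a : Formula) : Attacks (.form a) (.neg a)

/-- Particle rules, defense part: `Defends χ a s` means `s` is a permitted
    defense of the formula `χ` against the attack `a`.  (A negation admits
    no defense.) -/
inductive Defends : Formula → Statement → Statement → Prop
  | andL (a b : Formula) : Defends (.and a b) .andL (.form a)
  | andR (a b : Formula) : Defends (.and a b) .andR (.form b)
  | orL (a b : Formula) : Defends (.or a b) .qmark (.form a)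
  | orR (a b : Formula) : Defends (.or a b) .qmark (.form b)
  | imp (a b : Formula) : Defends (.imp a b) (.form a) (.form b)

/-- A move: a statement, a flag recording whether it is an attack (`true`)
    or a defense (`false`), and the position of the earlier move it attacks,
    resp. the earlier attack it defends against. -/
structure Move : Type where
  statement : Statement
  isAttack : Bool
  ref : ℕ
deriving DecidableEq

/-- A dialogue: the initial formula asserted by P at position 0, followed by
    the list of later moves (the move at list index `i` occupies position
    `i + 1`; O moves at odd positions, P at even positions). -/
structure Dialogue : Type where
  initial : Formula
  moves : List Move

/-- The statement asserted at position `n` (if any). -/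
def Dialogue.stmtAt (d : Dialogue) (n : ℕ) : Option Statement :=
  if n = 0 then some (.form d.initial) else (d.moves[n - 1]?).map Move.statement

/-- The move at position `n ≥ 1` (if any); position 0 is the initial assertion,
    not a move. -/
def Dialogue.moveAt (d : Dialogue) (n : ℕ) : Option Move :=
  if n = 0 then none else d.moves[n - 1]?

/-- The move `m`, played at position `n ≥ 1`, is permitted by the particle
    rules: it refers to an earlier position of the other player; if it is an
    attack, it attacks a formula asserted there, and if it is a defense, it
    responds to an attack played there, as the particle rules prescribe. -/
def MoveOK (d : Dialogue) (n : ℕ) (m : Move) : Prop :=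
  m.ref < n ∧ m.ref % 2 ≠ n % 2 ∧
    (m.isAttack = true →
      ∃ ψ, d.stmtAt m.ref = some (.form ψ) ∧ Attacks m.statement ψ) ∧
    (m.isAttack = false →
      ∃ a χ, d.moveAt m.ref = some a ∧ a.isAttack = true ∧
        d.stmtAt a.ref = some (.form χ) ∧ Defends χ a.statement m.statement)

/-- The dialogue adheres to the particle rules (every move is legal). -/
def ParticleOK (d : Dialogue) : Prop :=
  ∀ i m, d.moves[i]? = some m → MoveOK d (i + 1) m

/-- Position `n` carries a defense of the attack made at position `r`. -/
def IsDefenseOf (d : Dialogue) (n r : ℕ) : Prop :=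
  ∃ m, d.moveAt n = some m ∧ m.isAttack = false ∧ m.ref = r

/-- Position `n` carries an attack on the assertion made at position `r`. -/
def IsAttackOn (d : Dialogue) (n r : ℕ) : Prop :=
  ∃ m, d.moveAt n = some m ∧ m.isAttack = true ∧ m.ref = r

/-- Position `n` carries an attack. -/
def IsAttackPos (d : Dialogue) (n : ℕ) : Prop :=
  ∃ m, d.moveAt n = some m ∧ m.isAttack = true

/-- The attack at position `r` is still open (no defense against it has yet
    been played) before position `k`. -/
def OpenAt (d : Dialogue) (r k : ℕ) : Prop :=
  IsAttackPos d r ∧ ¬ ∃ j, j < k ∧ IsDefenseOf d j r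

/-- (D10) P may assert an atomic formula only after it has been asserted by O
    before. -/
def D10 (d : Dialogue) : Prop :=
  ∀ n p, n % 2 = 0 → d.stmtAt n = some (.form (.atom p)) →
    ∃ j, j < n ∧ j % 2 = 1 ∧ d.stmtAt j = some (.form (.atom p))

/-- (D10*) P may assert an atom `p` only if O has asserted `p` or `¬p`
    before. -/
def D10star (d : Dialogue) : Prop :=
  ∀ n p, n % 2 = 0 → d.stmtAt n = some (.form (.atom p)) →
    ∃ j, j < n ∧ j % 2 = 1 ∧
      (d.stmtAt j = some (.form (.atom p)) ∨
        d.stmtAt j = some (.form (.neg (.atom p))))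

/-- (D10′) P may assert an atom `p` only if O has asserted `p` or `¬¬p`
    before. -/
def D10prime (d : Dialogue) : Prop :=
  ∀ n p, n % 2 = 0 → d.stmtAt n = some (.form (.atom p)) →
    ∃ j, j < n ∧ j % 2 = 1 ∧
      (d.stmtAt j = some (.form (.atom p)) ∨
        d.stmtAt j = some (.form (.neg (.neg (.atom p)))))

/-- (D11) When defending, only the most recent open attack may be responded
    to: the attack defended against is open, and no strictly more recent open
    attack (against the same player) exists. -/
def D11 (d : Dialogue) : Prop :=
  ∀ n r, IsDefenseOf d n r →
    OpenAt d r n ∧ ¬ ∃ r', r < r' ∧ r' < n ∧ r' % 2 = r % 2 ∧ OpenAt d r' n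

/-- (D12) An attack may be answered at most once. -/
def D12 (d : Dialogue) : Prop :=
  ∀ n₁ n₂ r, IsDefenseOf d n₁ r → IsDefenseOf d n₂ r → n₁ = n₂

/-- (D13) A P-assertion (made at an even position) may be attacked at most
    once. -/
def D13 (d : Dialogue) : Prop :=
  ∀ n₁ n₂ r, r % 2 = 0 → IsAttackOn d n₁ r → IsAttackOn d n₂ r → n₁ = n₂

/-- (E) O can react only upon the immediately preceding P-statement. -/
def ERule (d : Dialogue) : Prop :=
  ∀ n m, n % 2 = 1 → d.moveAt n = some m → m.ref = n - 1

/-- A ruleset is a set of structural rules, i.e. a predicate on dialogues. -/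
def Ruleset := Dialogue → Prop

/-- Ruleset D = {D10, D11, D12, D13}. -/
def rulesetD : Ruleset := fun d => D10 d ∧ D11 d ∧ D12 d ∧ D13 d

/-- Ruleset E = D ∪ {E}. -/
def rulesetE : Ruleset := fun d => rulesetD d ∧ ERule d

/-- Ruleset CL = E − {D11, D12} = {D10, D13, E}. -/
def rulesetCL : Ruleset := fun d => D10 d ∧ D13 d ∧ ERule d

/-- Ruleset N = D − {D11, D12} = {D10, D13}. -/
def rulesetN : Ruleset := fun d => D10 d ∧ D13 d

/-- Ruleset E* = {D10*, D11, D12, D13, E}. -/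
def rulesetEstar : Ruleset :=
  fun d => D10star d ∧ D11 d ∧ D12 d ∧ D13 d ∧ ERule d

/-- Ruleset E′ = {D10′, D11, D12, D13, E}. -/
def rulesetEprime : Ruleset :=
  fun d => D10prime d ∧ D11 d ∧ D12 d ∧ D13 d ∧ ERule d

/-- An S-dialogue: a dialogue adhering to the particle rules and to the
    structural rules S. -/
def Legal (S : Ruleset) (d : Dialogue) : Prop := ParticleOK d ∧ S d

/-- Extend a dialogue by one move. -/
def Dialogue.extend (d : Dialogue) (m : Move) : Dialogue :=
  ⟨d.initial, d.moves ++ [m]⟩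

/-- The position about to be played. -/
def nextPos (d : Dialogue) : ℕ := d.moves.length + 1

/-- It is P's turn (the next position is even). -/
def PTurn (d : Dialogue) : Prop := nextPos d % 2 = 0

/-- The move `m` legally extends the S-dialogue `d`. -/
def LegalExt (S : Ruleset) (d : Dialogue) (m : Move) : Prop :=
  Legal S (d.extend m)

/-- `PWinningC S C d` holds when P, moving under the additional constraint
    `C` on P's own choices, has a winning strategy in the S-dialogue game
    continuing the dialogue `d`: at P's turn, P has a legal move (satisfying
    `C`) after which P is still winning; at O's turn, every legal O-move
    leads to a position where P is winning (in particular, if no O-move is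
    available, P has won: P made the last move and O cannot move). -/
inductive PWinningC (S : Ruleset) (C : Dialogue → Move → Prop) : Dialogue → Prop
  | pMove (d : Dialogue) (m : Move) (hturn : PTurn d)
      (hm : LegalExt S d m) (hC : C d m)
      (h : PWinningC S C (d.extend m)) : PWinningC S C d
  | oMoves (d : Dialogue) (hturn : ¬ PTurn d)
      (h : ∀ m, LegalExt S d m → PWinningC S C (d.extend m)) :
      PWinningC S C d

/-- P has a winning strategy continuing the S-dialogue `d`. -/
def PWinning (S : Ruleset) (d : Dialogue) : Prop :=
  PWinningC S (fun _ _ => True) d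

/-- `valid S φ` (written `⊨_S φ`): the opening assertion of φ is itself a
    legal S-dialogue and P has an S-winning strategy for φ. -/
def valid (S : Ruleset) (φ : Formula) : Prop :=
  Legal S ⟨φ, []⟩ ∧ PWinning S ⟨φ, []⟩

/-- Derivability in intuitionistic propositional logic (a Hilbert-style
    axiomatization with modus ponens). -/
inductive IProv : Formula → Prop
  | k (a b : Formula) : IProv (.imp a (.imp b a))
  | s (a b c : Formula) :
      IProv (.imp (.imp a (.imp b c)) (.imp (.imp a b) (.imp a c)))
  | andE1 (a b : Formula) : IProv (.imp (.and a b) a)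
  | andE2 (a b : Formula) : IProv (.imp (.and a b) b)
  | andI (a b : Formula) : IProv (.imp a (.imp b (.and a b)))
  | orI1 (a b : Formula) : IProv (.imp a (.or a b))
  | orI2 (a b : Formula) : IProv (.imp b (.or a b))
  | orE (a b c : Formula) :
      IProv (.imp (.imp a c) (.imp (.imp b c) (.imp (.or a b) c)))
  | negI (a b : Formula) :
      IProv (.imp (.imp a b) (.imp (.imp a (.neg b)) (.neg a)))
  | negE (a b : Formula) : IProv (.imp (.neg a) (.imp a b))
  | mp (a b : Formula) : IProv (.imp a b) → IProv a → IProv b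

/-- The stability principle ¬¬p → p for the atom `p`. -/
def stab (p : ℕ) : Formula := .imp (.neg (.neg (.atom p))) (.atom p)

/-- Stable logic: intuitionistic propositional logic plus all instances of
    the stability scheme ¬¬p → p for atoms p, closed under modus ponens. -/
inductive StableProv : Formula → Prop
  | intuit (a : Formula) : IProv a → StableProv a
  | stab (p : ℕ) : StableProv (stab p)
  | mp (a b : Formula) : StableProv (.imp a b) → StableProv a → StableProv b

/-- Boolean evaluation of a formula under a valuation of its atoms. -/
def Formula.eval (v : ℕ → Bool) : Formula → Bool
  | .atom p => v p
  | .neg a => !(a.eval v)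
  | .and a b => a.eval v && b.eval v
  | .or a b => a.eval v || b.eval v
  | .imp a b => !(a.eval v) || b.eval v

/-- A classical tautology: true under every Boolean valuation. -/
def Tautology (φ : Formula) : Prop := ∀ v, φ.eval v = true

/-- Uniform substitution of formulas for atoms, applied homomorphically. -/
def Formula.subst (σ : ℕ → Formula) : Formula → Formula
  | .atom p => σ p
  | .neg a => .neg (a.subst σ)
  | .and a b => .and (a.subst σ) (b.subst σ)
  | .or a b => .or (a.subst σ) (b.subst σ)
  | .imp a b => .imp (a.subst σ) (b.subst σ)

/-- The atoms occurring in a formula. -/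
def Formula.atoms : Formula → List ℕ
  | .atom p => [p]
  | .neg a => a.atoms
  | .and a b => a.atoms ++ b.atoms
  | .or a b => a.atoms ++ b.atoms
  | .imp a b => a.atoms ++ b.atoms

/-- Conjunction of a nonempty list of formulas. -/
def conjList (f : Formula) : List Formula → Formula
  | [] => f
  | g :: gs => .and f (conjList g gs)

/-- The conjunction (¬¬p → p) ∧ … of stability instances for the atoms
    `p :: ps`. -/
def stabConj (p : ℕ) (ps : List ℕ) : Formula :=
  conjList (stab p) (ps.map stab)

/-! A winning strategy for `φ` is carried along the substitution move by move. P's moves are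
substituted, and O's replies in the substituted dialogue pull back to the original one, because the
particle rules only look at the main connective of the formula attacked or defended. The exception
is an O-attack on a P-assertion `σ p` of an atom `p`: by (D10) O asserted `p`, hence `σ p`, earlier,
and from there P wins by copycat, repeating each O-attack against O's own assertion of the same
formula and copying O's answer as his defence. Rule (E) keeps O reacting to P's last move, so O
cannot escape the copy, and each round descends to a proper subformula, so the play ends. -/

section Bookkeeping

variable {d : Dialogue} {m m' : Move} {n : ℕ} {s : Statement}

@[simp] lemma Dialogue.extend_moves_length : (d.extend m).moves.length = d.moves.length + 1 := by
  simp [Dialogue.extend]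

lemma pTurn_extend : PTurn (d.extend m) ↔ ¬ PTurn d := by
  simp only [PTurn, nextPos, Dialogue.extend_moves_length]
  omega

lemma Dialogue.stmtAt_extend_of_le (h : n ≤ d.moves.length) :
    (d.extend m).stmtAt n = d.stmtAt n := by
  unfold Dialogue.stmtAt Dialogue.extend
  split
  · rfl
  · rw [List.getElem?_append_left (by omega)]

lemma Dialogue.moveAt_extend_of_le (h : n ≤ d.moves.length) :
    (d.extend m).moveAt n = d.moveAt n := by
  unfold Dialogue.moveAt Dialogue.extend
  split
  · rfl
  · rw [List.getElem?_append_left (by omega)]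

lemma Dialogue.moveAt_extend_last (h : n = d.moves.length + 1) :
    (d.extend m).moveAt n = some m := by
  subst h
  simp [Dialogue.moveAt, Dialogue.extend]

lemma Dialogue.stmtAt_of_moveAt (h : d.moveAt n = some m) : d.stmtAt n = some m.statement := by
  unfold Dialogue.moveAt at h
  unfold Dialogue.stmtAt
  split_ifs at h ⊢
  rw [h]
  rfl

lemma Dialogue.stmtAt_extend_last (h : n = d.moves.length + 1) :
    (d.extend m).stmtAt n = some m.statement :=
  Dialogue.stmtAt_of_moveAt (Dialogue.moveAt_extend_last h)

lemma Dialogue.le_length_of_stmtAt (h : d.stmtAt n = some s) : n ≤ d.moves.length := by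
  unfold Dialogue.stmtAt at h
  split_ifs at h with hn
  · omega
  · obtain ⟨m, hm, -⟩ := Option.map_eq_some_iff.mp h
    have := (List.getElem?_eq_some_iff.mp hm).1
    omega

lemma Dialogue.le_length_of_moveAt (h : d.moveAt n = some m) : n ≤ d.moves.length :=
  Dialogue.le_length_of_stmtAt (Dialogue.stmtAt_of_moveAt h)

variable {r : ℕ} {ψ : Formula}

lemma moveOK_attack (hlt : r < n) (hpar : r % 2 ≠ n % 2) (hψ : d.stmtAt r = some (.form ψ))
    (hatt : Attacks s ψ) : MoveOK d n ⟨s, true, r⟩ :=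
  ⟨hlt, hpar, fun _ => ⟨ψ, hψ, hatt⟩, nofun⟩

lemma moveOK_defense {a : Move} (hlt : r < n) (hpar : r % 2 ≠ n % 2) (ha : d.moveAt r = some a)
    (haA : a.isAttack = true) (hψ : d.stmtAt a.ref = some (.form ψ))
    (hdef : Defends ψ a.statement s) : MoveOK d n ⟨s, false, r⟩ :=
  ⟨hlt, hpar, nofun, fun _ => ⟨a, ψ, ha, haA, hψ, hdef⟩⟩

lemma ParticleOK.moveOK (hp : ParticleOK d) (h : d.moveAt n = some m) : MoveOK d n m := by
  unfold Dialogue.moveAt at h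
  split_ifs at h with hn
  simpa [Nat.sub_add_cancel (Nat.pos_of_ne_zero hn)] using hp (n - 1) m h

lemma MoveOK.extend (h : MoveOK d n m') : MoveOK (d.extend m) n m' := by
  obtain ⟨hlt, hpar, hatt, hdef⟩ := h
  refine ⟨hlt, hpar, fun hA => ?_, fun hA => ?_⟩
  · obtain ⟨ψ, hψ, hψatt⟩ := hatt hA
    exact ⟨ψ, by rwa [Dialogue.stmtAt_extend_of_le (Dialogue.le_length_of_stmtAt hψ)], hψatt⟩
  · obtain ⟨a, χ, ha, haA, hχ, hχdef⟩ := hdef hA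
    exact ⟨a, χ, by rwa [Dialogue.moveAt_extend_of_le (Dialogue.le_length_of_moveAt ha)], haA,
      by rwa [Dialogue.stmtAt_extend_of_le (Dialogue.le_length_of_stmtAt hχ)], hχdef⟩

lemma MoveOK.of_extend (hp : ParticleOK d) (h : MoveOK (d.extend m) (nextPos d) m') :
    MoveOK d (nextPos d) m' := by
  obtain ⟨hlt, hpar, hatt, hdef⟩ := h
  have href : m'.ref ≤ d.moves.length := by simp only [nextPos] at hlt; omega
  refine ⟨hlt, hpar, fun hA => ?_, fun hA => ?_⟩
  · obtain ⟨ψ, hψ, hψatt⟩ := hatt hA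
    exact ⟨ψ, by rwa [Dialogue.stmtAt_extend_of_le href] at hψ, hψatt⟩
  · obtain ⟨a, χ, ha, haA, hχ, hχdef⟩ := hdef hA
    rw [Dialogue.moveAt_extend_of_le href] at ha
    have : a.ref < m'.ref := (hp.moveOK ha).1
    exact ⟨a, χ, ha, haA, by rwa [Dialogue.stmtAt_extend_of_le (by omega)] at hχ, hχdef⟩

lemma ParticleOK.extend (hp : ParticleOK d) (hm : MoveOK d (nextPos d) m) :
    ParticleOK (d.extend m) := by
  intro i m₀ hi
  rcases Nat.lt_or_ge i d.moves.length with hlt | hge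
  · rw [Dialogue.extend, List.getElem?_append_left hlt] at hi
    exact (hp i m₀ hi).extend
  · obtain ⟨rfl, rfl⟩ : i = d.moves.length ∧ m = m₀ := by
      have := (List.getElem?_eq_some_iff.mp hi).1
      simp only [Dialogue.extend_moves_length] at this
      obtain rfl : i = d.moves.length := by omega
      simpa [Dialogue.extend] using hi
    exact hm.extend

end Bookkeeping

section RulesetCL

variable {d : Dialogue} {m : Move}

/-- Under (E) every O-move attacks the P-statement right before it, so (D13) comes for free. -/
lemma D13_of_particleOK_of_ERule (hp : ParticleOK d) (hE : ERule d) : D13 d := by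
  have key : ∀ n r, r % 2 = 0 → IsAttackOn d n r → n = r + 1 := by
    rintro n r hr ⟨m, hm, -, rfl⟩
    have hpar := (hp.moveOK hm).2.1
    have := hE n m (by omega) hm
    have := (hp.moveOK hm).1
    omega
  intro n₁ n₂ r hr h₁ h₂
  rw [key n₁ r hr h₁, key n₂ r hr h₂]

lemma legal_rulesetCL (hp : ParticleOK d) (h10 : D10 d) (hE : ERule d) : Legal rulesetCL d :=
  ⟨hp, h10, D13_of_particleOK_of_ERule hp hE, hE⟩

lemma D10.extend (h : D10 d)
    (hm : PTurn d → ∀ q, m.statement = .form (.atom q) →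
      ∃ j, j % 2 = 1 ∧ d.stmtAt j = some (.form (.atom q))) :
    D10 (d.extend m) := by
  intro n p hn hp
  rcases Nat.lt_or_ge n (d.moves.length + 1) with hlt | hge
  · rw [Dialogue.stmtAt_extend_of_le (by omega)] at hp
    obtain ⟨j, hjn, hj, hjp⟩ := h n p hn hp
    exact ⟨j, hjn, hj, by rwa [Dialogue.stmtAt_extend_of_le (by omega)]⟩
  · have hn' : n = d.moves.length + 1 := by
      have := Dialogue.le_length_of_stmtAt hp
      simp only [Dialogue.extend_moves_length] at this
      omega
    rw [Dialogue.stmtAt_extend_last hn', Option.some_inj] at hp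
    obtain ⟨j, hj, hjp⟩ := hm (by simp only [PTurn, nextPos]; omega) p hp
    have := Dialogue.le_length_of_stmtAt hjp
    exact ⟨j, by omega, hj, by rwa [Dialogue.stmtAt_extend_of_le this]⟩

lemma ERule.extend (h : ERule d) (hm : ¬ PTurn d → m.ref = d.moves.length) :
    ERule (d.extend m) := by
  intro n m₀ hn hm₀
  rcases Nat.lt_or_ge n (d.moves.length + 1) with hlt | hge
  · rw [Dialogue.moveAt_extend_of_le (by omega)] at hm₀
    exact h n m₀ hn hm₀
  · have hn' : n = d.moves.length + 1 := by
      have := Dialogue.le_length_of_moveAt hm₀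
      simp only [Dialogue.extend_moves_length] at this
      omega
    rw [Dialogue.moveAt_extend_last hn', Option.some_inj] at hm₀
    subst hm₀
    rw [hm (by simp only [PTurn, nextPos]; omega)]
    omega

lemma legalExt_of_not_pTurn (hd : Legal rulesetCL d) (hturn : ¬ PTurn d)
    (hm : MoveOK d (nextPos d) m) (href : m.ref = d.moves.length) :
    LegalExt rulesetCL d m :=
  legal_rulesetCL (hd.1.extend hm) (hd.2.1.extend fun h => absurd h hturn)
    (hd.2.2.2.extend fun _ => href)

lemma LegalExt.moveOK {S : Ruleset} (hp : ParticleOK d) (hm : LegalExt S d m) :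
    MoveOK d (nextPos d) m :=
  (hm.1.moveOK (Dialogue.moveAt_extend_last rfl)).of_extend hp

lemma LegalExt.ref_eq (hm : LegalExt rulesetCL d m) (hturn : ¬ PTurn d) :
    m.ref = d.moves.length := by
  have := hm.2.2.2 _ m (by simp only [PTurn, nextPos] at hturn; omega)
    (Dialogue.moveAt_extend_last rfl)
  omega

lemma legalExt_copy (hd : Legal rulesetCL d) (hturn : PTurn d)
    (hlast : d.stmtAt d.moves.length = some m.statement) (hm : MoveOK d (nextPos d) m) :
    LegalExt rulesetCL d m :=
  legal_rulesetCL (hd.1.extend hm)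
    (hd.2.1.extend fun _ _ hq =>
      ⟨_, by simp only [PTurn, nextPos] at hturn; omega, hlast.trans (congrArg some hq)⟩)
    (hd.2.2.2.extend fun h => absurd hturn h)

lemma LegalExt.attack_or_defense (hp : ParticleOK d) (hm : LegalExt rulesetCL d m)
    (hturn : ¬ PTurn d) :
    m.ref = d.moves.length ∧
      ((m.isAttack = true ∧ ∃ ψ, d.stmtAt d.moves.length = some (.form ψ) ∧
          Attacks m.statement ψ) ∨
        (m.isAttack = false ∧ ∃ a χ, d.moveAt d.moves.length = some a ∧ a.isAttack = true ∧
          d.stmtAt a.ref = some (.form χ) ∧ Defends χ a.statement m.statement)) := by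
  have href := hm.ref_eq hturn
  obtain ⟨-, -, hatt, hdef⟩ := hm.moveOK hp
  rw [href] at hatt hdef
  cases hA : m.isAttack
  · exact ⟨href, .inr ⟨rfl, hdef hA⟩⟩
  · exact ⟨href, .inl ⟨rfl, hatt hA⟩⟩

lemma pWinning_of_pMove (hturn : PTurn d) (hm : LegalExt rulesetCL d m)
    (h : ∀ o, LegalExt rulesetCL (d.extend m) o → PWinning rulesetCL ((d.extend m).extend o)) :
    PWinning rulesetCL d :=
  .pMove d m hturn hm trivial (.oMoves _ (fun h' => pTurn_extend.mp h' hturn) h)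

end RulesetCL

section Copycat

lemma Attacks.sizeOf_lt {ψ χ : Formula} (h : Attacks (.form ψ) χ) : sizeOf ψ < sizeOf χ := by
  cases h <;> simp only [Formula.imp.sizeOf_spec, Formula.neg.sizeOf_spec] <;> omega

lemma Defends.exists_form {χ : Formula} {a s : Statement} (h : Defends χ a s) :
    ∃ τ, s = .form τ ∧ sizeOf τ < sizeOf χ := by
  cases h <;> refine ⟨_, rfl, ?_⟩ <;>
    simp only [Formula.and.sizeOf_spec, Formula.or.sizeOf_spec, Formula.imp.sizeOf_spec] <;> omega

theorem pWinning_copycat {χ : Formula} {e : Dialogue} {a : Move} {r : ℕ}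
    (he : Legal rulesetCL e) (hturn : PTurn e)
    (ha : e.moveAt e.moves.length = some a) (haA : a.isAttack = true)
    (hχ : e.stmtAt a.ref = some (.form χ)) (hatt : Attacks a.statement χ)
    (hr : r % 2 = 1) (hrL : r < e.moves.length) (hrχ : e.stmtAt r = some (.form χ)) :
    PWinning rulesetCL e := by
  have hL : e.moves.length % 2 = 1 := by simp only [PTurn, nextPos] at hturn; omega
  have haL : e.stmtAt e.moves.length = some a.statement := e.stmtAt_of_moveAt ha
  have haref : a.ref < e.moves.length := (he.1.moveOK ha).1
  set c : Move := ⟨a.statement, true, r⟩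
  have hc : LegalExt rulesetCL e c := legalExt_copy he hturn haL
    (moveOK_attack (by simp only [nextPos]; omega) (by simp only [nextPos]; omega) hrχ hatt)
  refine pWinning_of_pMove hturn hc fun o ho => ?_
  have hturn₁ : ¬ PTurn (e.extend c) := fun h => pTurn_extend.mp h hturn
  rcases ho.attack_or_defense hc.1 hturn₁ with
    ⟨horef, ⟨hoA, ψ, hψ, hatt'⟩ | ⟨-, c₀, χ₀, hc₀, -, hχ₀, hdef⟩⟩
  · have haψ : a.statement = .form ψ := by
      rwa [Dialogue.stmtAt_extend_last (by simp), Option.some_inj] at hψ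
    exact pWinning_copycat ho (pTurn_extend.mpr hturn₁) (Dialogue.moveAt_extend_last (by simp)) hoA
      (by rw [Dialogue.stmtAt_extend_of_le (by simp [horef]), horef,
        Dialogue.stmtAt_extend_last (by simp), haψ]) hatt'
      hL (by simp)
      (by rw [Dialogue.stmtAt_extend_of_le (by simp), Dialogue.stmtAt_extend_of_le le_rfl, haL,
        haψ])
  rw [Dialogue.moveAt_extend_last (by simp), Option.some_inj] at hc₀
  subst hc₀
  rw [Dialogue.stmtAt_extend_of_le hrL.le, hrχ, Option.some_inj, Statement.form.injEq] at hχ₀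
  subst hχ₀
  obtain ⟨τ, hτ, hτχ⟩ := hdef.exists_form
  set c' : Move := ⟨o.statement, false, e.moves.length⟩
  have hc' : LegalExt rulesetCL ((e.extend c).extend o) c' :=
    legalExt_copy ho (pTurn_extend.mpr hturn₁) (Dialogue.stmtAt_extend_last (by simp))
      (moveOK_defense (by simp only [nextPos, Dialogue.extend_moves_length]; omega)
        (by simp only [nextPos, Dialogue.extend_moves_length]; omega)
        (by rw [Dialogue.moveAt_extend_of_le (by simp), Dialogue.moveAt_extend_of_le le_rfl, ha])
        haA
        (by rw [Dialogue.stmtAt_extend_of_le (by simp only [Dialogue.extend_moves_length]; omega),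
          Dialogue.stmtAt_extend_of_le haref.le, hχ])
        hdef)
  refine pWinning_of_pMove (pTurn_extend.mpr hturn₁) hc' fun o' ho' => ?_
  have hturn₃ : ¬ PTurn (((e.extend c).extend o).extend c') :=
    fun h => pTurn_extend.mp h (pTurn_extend.mpr hturn₁)
  rcases ho'.attack_or_defense hc'.1 hturn₃ with
    ⟨ho'ref, ⟨ho'A, ψ, hψ, hatt'⟩ | ⟨-, c₀, -, hc₀, hc₀A, -⟩⟩
  · rw [Dialogue.stmtAt_extend_last (by simp), hτ] at hψ
    obtain rfl : τ = ψ := by simpa using hψ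
    exact pWinning_copycat ho' (pTurn_extend.mpr hturn₃) (Dialogue.moveAt_extend_last (by simp))
      ho'A (by rw [Dialogue.stmtAt_extend_of_le (by simp [ho'ref]), ho'ref,
        Dialogue.stmtAt_extend_last (by simp), hτ]) hatt'
      (r := e.moves.length + 2) (by omega) (by simp)
      (by rw [Dialogue.stmtAt_extend_of_le (by simp), Dialogue.stmtAt_extend_of_le (by simp),
        Dialogue.stmtAt_extend_last (by simp), hτ])
  · -- P's last move is a defence, which cannot be defended against
    rw [Dialogue.moveAt_extend_last (by simp), Option.some_inj] at hc₀
    simp [← hc₀, c'] at hc₀A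
termination_by sizeOf χ
decreasing_by
  · exact (haψ ▸ hatt).sizeOf_lt
  · exact hτχ

end Copycat

section Substitution

variable (σ : ℕ → Formula)

def Statement.subst : Statement → Statement
  | .form ψ => .form (ψ.subst σ)
  | .qmark => .qmark
  | .andL => .andL
  | .andR => .andR

def Move.subst (m : Move) : Move := ⟨m.statement.subst σ, m.isAttack, m.ref⟩

def Dialogue.subst (d : Dialogue) : Dialogue := ⟨d.initial.subst σ, d.moves.map (Move.subst σ)⟩

variable {σ} {d : Dialogue} {m : Move} {n : ℕ}

@[simp] lemma Dialogue.subst_moves_length : (d.subst σ).moves.length = d.moves.length :=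
  List.length_map _

lemma pTurn_subst : PTurn (d.subst σ) ↔ PTurn d := by
  simp only [PTurn, nextPos, Dialogue.subst_moves_length]

lemma Dialogue.subst_extend : (d.extend m).subst σ = (d.subst σ).extend (m.subst σ) := by
  simp [Dialogue.subst, Dialogue.extend]

lemma Dialogue.stmtAt_subst : (d.subst σ).stmtAt n = (d.stmtAt n).map (Statement.subst σ) := by
  unfold Dialogue.stmtAt
  split
  · rfl
  · simp only [Dialogue.subst, List.getElem?_map, Option.map_map]
    rfl

lemma Dialogue.moveAt_subst : (d.subst σ).moveAt n = (d.moveAt n).map (Move.subst σ) := by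
  unfold Dialogue.moveAt
  split
  · rfl
  · simp [Dialogue.subst]

lemma Statement.exists_of_subst_eq_form {s : Statement} {τ : Formula}
    (h : s.subst σ = .form τ) : ∃ ψ, s = .form ψ ∧ ψ.subst σ = τ := by
  cases s <;> simp_all [Statement.subst]

lemma Formula.exists_of_subst_eq_atom {ψ : Formula} {q : ℕ} (h : ψ.subst σ = .atom q) :
    ∃ p, ψ = .atom p := by
  cases ψ <;> simp_all [Formula.subst]

lemma Attacks.subst {s : Statement} {ψ : Formula} (h : Attacks s ψ) :
    Attacks (s.subst σ) (ψ.subst σ) := by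
  cases h <;> constructor

lemma Defends.subst {χ : Formula} {a s : Statement} (h : Defends χ a s) :
    Defends (χ.subst σ) (a.subst σ) (s.subst σ) := by
  cases h <;> constructor

lemma Attacks.exists_of_subst {ψ : Formula} (hψ : ∀ p, ψ ≠ .atom p) {s' : Statement}
    (h : Attacks s' (ψ.subst σ)) : ∃ s, s.subst σ = s' ∧ Attacks s ψ := by
  cases ψ with
  | atom p => exact absurd rfl (hψ p)
  | neg a => cases h; exact ⟨.form a, rfl, .neg a⟩
  | and a b =>
    cases h
    · exact ⟨.andL, rfl, .andL a b⟩
    · exact ⟨.andR, rfl, .andR a b⟩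
  | or a b => cases h; exact ⟨.qmark, rfl, .qmark a b⟩
  | imp a b => cases h; exact ⟨.form a, rfl, .imp a b⟩

lemma Defends.exists_of_subst {χ : Formula} {a s' : Statement} (ha : Attacks a χ)
    (h : Defends (χ.subst σ) (a.subst σ) s') : ∃ s, s.subst σ = s' ∧ Defends χ a s := by
  cases ha with
  | andL a b => cases h; exact ⟨.form a, rfl, .andL a b⟩
  | andR a b => cases h; exact ⟨.form b, rfl, .andR a b⟩
  | qmark a b =>
    cases h
    · exact ⟨.form a, rfl, .orL a b⟩
    · exact ⟨.form b, rfl, .orR a b⟩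
  | imp a b => cases h; exact ⟨.form b, rfl, .imp a b⟩
  | neg a => cases h

lemma MoveOK.subst (h : MoveOK d n m) : MoveOK (d.subst σ) n (m.subst σ) := by
  obtain ⟨hlt, hpar, hatt, hdef⟩ := h
  refine ⟨hlt, hpar, fun hA => ?_, fun hA => ?_⟩
  · obtain ⟨ψ, hψ, hψatt⟩ := hatt hA
    exact ⟨ψ.subst σ, by rw [Move.subst, Dialogue.stmtAt_subst, hψ]; rfl, hψatt.subst⟩
  · obtain ⟨a, χ, ha, haA, hχ, hχdef⟩ := hdef hA
    refine ⟨a.subst σ, χ.subst σ, ?_, haA, ?_, hχdef.subst⟩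
    · rw [Move.subst, Dialogue.moveAt_subst, ha]; rfl
    · rw [Move.subst, Dialogue.stmtAt_subst, hχ]; rfl

lemma D10.subst (h : D10 d) : D10 (d.subst σ) := by
  intro n q hn hq
  rw [Dialogue.stmtAt_subst, Option.map_eq_some_iff] at hq
  obtain ⟨s, hs, hsq⟩ := hq
  obtain ⟨ψ, rfl, hψ⟩ := Statement.exists_of_subst_eq_form hsq
  obtain ⟨p, rfl⟩ := Formula.exists_of_subst_eq_atom hψ
  obtain ⟨j, hjn, hj, hjp⟩ := h n p hn hs
  exact ⟨j, hjn, hj, by rw [Dialogue.stmtAt_subst, hjp]; exact congrArg (some ∘ Statement.form) hψ⟩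

lemma ERule.subst (h : ERule d) : ERule (d.subst σ) := by
  intro n m' hn hm'
  rw [Dialogue.moveAt_subst, Option.map_eq_some_iff] at hm'
  obtain ⟨m, hm, rfl⟩ := hm'
  exact h n m hn hm

lemma Legal.subst (h : Legal rulesetCL d) : Legal rulesetCL (d.subst σ) :=
  legal_rulesetCL (fun i m' hm' => by
      rw [Dialogue.subst, List.getElem?_map, Option.map_eq_some_iff] at hm'
      obtain ⟨m, hm, rfl⟩ := hm'
      exact (h.1 i m hm).subst)
    h.2.1.subst h.2.2.2.subst

end Substitution

section Simulation

variable {σ : ℕ → Formula} {d : Dialogue}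

lemma MoveOK.exists_of_subst (hd : ParticleOK d) {n : ℕ} {m' : Move}
    (h : MoveOK (d.subst σ) n m')
    (hatom : m'.isAttack = true → ∀ p, d.stmtAt m'.ref ≠ some (.form (.atom p))) :
    ∃ m, m.subst σ = m' ∧ MoveOK d n m := by
  obtain ⟨hlt, hpar, hatt, hdef⟩ := h
  obtain ⟨s', b, r⟩ := m'
  cases b
  · obtain ⟨a', χ', ha', haA, hχ', hdef'⟩ := hdef rfl
    rw [Dialogue.moveAt_subst, Option.map_eq_some_iff] at ha'
    obtain ⟨a, ha, rfl⟩ := ha'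
    obtain ⟨χ, hχ, hχatt⟩ := (hd.moveOK ha).2.2.1 haA
    rw [Move.subst, Dialogue.stmtAt_subst, hχ] at hχ'
    obtain rfl : χ.subst σ = χ' := by simpa [Statement.subst] using hχ'
    obtain ⟨s, rfl, hs⟩ := Defends.exists_of_subst hχatt hdef'
    exact ⟨⟨s, false, r⟩, rfl, moveOK_defense hlt hpar ha haA hχ hs⟩
  · obtain ⟨ψ', hψ', hatt'⟩ := hatt rfl
    rw [Dialogue.stmtAt_subst, Option.map_eq_some_iff] at hψ'
    obtain ⟨s₀, hs₀, hs₀ψ⟩ := hψ'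
    obtain ⟨ψ, rfl, rfl⟩ := Statement.exists_of_subst_eq_form hs₀ψ
    obtain ⟨s, rfl, hs⟩ := Attacks.exists_of_subst (fun p hp => hatom rfl p (hp ▸ hs₀)) hatt'
    exact ⟨⟨s, true, r⟩, rfl, moveOK_attack hlt hpar hs₀ hs⟩

theorem PWinning.subst (hwin : PWinning rulesetCL d) (hd : Legal rulesetCL d) :
    PWinning rulesetCL (d.subst σ) := by
  induction hwin with
  | pMove d m hturn hm _ _ ih =>
    have hm' : LegalExt rulesetCL (d.subst σ) (m.subst σ) := by
      rw [LegalExt, ← Dialogue.subst_extend]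
      exact hm.subst
    refine .pMove _ _ (pTurn_subst.mpr hturn) hm' trivial ?_
    rw [← Dialogue.subst_extend]
    exact ih hm
  | oMoves d hturn _ ih =>
    have hturn' : ¬ PTurn (d.subst σ) := pTurn_subst.not.mpr hturn
    refine .oMoves _ hturn' fun m' hm' => ?_
    have href : m'.ref = d.moves.length := by simpa using hm'.ref_eq hturn'
    have hok : MoveOK (d.subst σ) (nextPos d) m' := by
      simpa [nextPos] using hm'.moveOK hd.subst.1
    by_cases hatom : m'.isAttack = true ∧ ∃ p, d.stmtAt d.moves.length = some (.form (.atom p))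
    · obtain ⟨hA, p, hp⟩ := hatom
      obtain ⟨ψ, hψ, hatt⟩ := hok.2.2.1 hA
      rw [href, Dialogue.stmtAt_subst, hp] at hψ
      obtain rfl : σ p = ψ := by simpa [Statement.subst, Formula.subst] using hψ
      obtain ⟨j, hjL, hj, hjp⟩ := hd.2.1 _ p (by simp only [PTurn, nextPos] at hturn; omega) hp
      refine pWinning_copycat hm' (pTurn_extend.mpr hturn') (Dialogue.moveAt_extend_last (by simp))
        hA ?_ hatt hj (by simpa using hjL.le) ?_
      · rw [Dialogue.stmtAt_extend_of_le (by simp [href]), href, Dialogue.stmtAt_subst, hp]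
        rfl
      · rw [Dialogue.stmtAt_extend_of_le (by rw [Dialogue.subst_moves_length]; omega),
          Dialogue.stmtAt_subst, hjp]
        rfl
    · obtain ⟨m, rfl, hm⟩ :=
        hok.exists_of_subst hd.1 fun hA p hp => hatom ⟨hA, p, href ▸ hp⟩
      have hm : LegalExt rulesetCL d m := legalExt_of_not_pTurn hd hturn hm href
      rw [← Dialogue.subst_extend]
      exact ih m hm hm

end Simulation

/-- The set of CL-valid formulas is closed under uniform substitution. -/
theorem CL_uniform_substitution (φ : Formula) (σ : ℕ → Formula)
    (h : valid rulesetCL φ) : valid rulesetCL (φ.subst σ) :=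
  ⟨h.1.subst, h.2.subst h.1⟩

end LorenzenDialogues
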